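/- (Maximum principle for the interference function.) Let s₁,…,s_m ∈ ℝ² be finitely many points with associated powers P₁,…,P_m > 0, and let I(p) = Σ_{i=1}^{m} P_i·‖p−s_i‖^{−2} be the interference function (path-loss exponent 2). Then for every nonempty compact connected set D ⊆ ℝ² with D ∩ {s₁,…,s_m} = ∅, the maximum of I over D is attained on the boundary: max_{p ∈ D} I(p) = max_{p ∈ ∂D} I(p), where ∂D is the topological frontier of D. -/

import Mathlib

open Finset

/-- The interference function of stations `s` with powers `P` in the plane,
with path-loss exponent 2. -/
noncomputable def interference {m : ℕ} (s : Fin m → EuclideanSpace ℝ (Fin 2))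
    (P : Fin m → ℝ) (p : EuclideanSpace ℝ (Fin 2)) : ℝ :=
  ∑ i : Fin m, P i / dist p (s i) ^ 2

theorem interference_maximum_principle {m : ℕ}
    (s : Fin m → EuclideanSpace ℝ (Fin 2)) (P : Fin m → ℝ) (hP : ∀ i, 0 < P i)
    (D : Set (EuclideanSpace ℝ (Fin 2)))
    (hDcomp : IsCompact D) (hDconn : IsConnected D)
    (hDdisj : ∀ i, s i ∉ D) :
    ∃ p₀ ∈ frontier D, ∀ p ∈ D, interference s P p ≤ interference s P p₀ := by
  classical
  have hDclosed : IsClosed D := hDcomp.isClosed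
  -- continuity of the interference function on D
  have hcont : ContinuousOn (interference s P) D := by
    apply continuousOn_finset_sum
    intro i _
    apply ContinuousOn.div continuousOn_const
      (((continuous_id.dist continuous_const).pow 2).continuousOn)
    intro p hp
    exact pow_ne_zero _ (dist_ne_zero.mpr (fun h => hDdisj i (h ▸ hp)))
  obtain ⟨p₀, hp₀D, hmax⟩ := hDcomp.exists_isMaxOn hDconn.nonempty hcont
  by_cases hint : p₀ ∈ interior D
  · -- interior maximum: push it to the frontier via the maximum modulus principle
    set e : ℂ ≃ₗᵢ[ℝ] EuclideanSpace ℝ (Fin 2) := Complex.orthonormalBasisOneI.repr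
      with he
    set a : Fin m → ℂ := fun i => e.symm (s i) with ha
    set J : ℂ → ℝ := fun z => ∑ i : Fin m, P i / dist z (a i) ^ 2 with hJ
    have hJI : ∀ p, interference s P p = J (e.symm p) := by
      intro p
      simp only [interference, hJ, ha, LinearIsometryEquiv.dist_map]
    set U : Set ℂ := ⇑e ⁻¹' interior D with hU
    set z₀ : ℂ := e.symm p₀ with hz₀
    have hz₀U : z₀ ∈ U := by
      simp only [hU, Set.mem_preimage, hz₀, LinearIsometryEquiv.apply_symm_apply]
      exact hint
    set M : ℝ := interference s P p₀ with hM
    have hMJ : M = J z₀ := hJI p₀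
    have hMnonneg : 0 ≤ M := by
      rw [hMJ]
      exact Finset.sum_nonneg fun i _ =>
        div_nonneg (hP i).le (sq_nonneg _)
    -- the preimage of D
    have hsubD : U ⊆ ⇑e ⁻¹' D := Set.preimage_mono interior_subset
    have hDpre_closed : IsClosed (⇑e ⁻¹' D) := hDclosed.preimage e.continuous
    have hclU : closure U ⊆ ⇑e ⁻¹' D := closure_minimal hsubD hDpre_closed
    have hbdd : Bornology.IsBounded U :=
      (e.isometry.antilipschitz.isBounded_preimage hDcomp.isBounded).subset hsubD
    -- points of `e ⁻¹' D` avoid all `a i`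
    have hne_a : ∀ z ∈ ⇑e ⁻¹' D, ∀ i, z ≠ a i := by
      intro z hz i h
      apply hDdisj i
      have : e z = s i := by
        rw [h, ha]; simp
      rwa [← this]
    -- the auxiliary holomorphic function
    set g : ℂ → ℂ := fun z =>
      ∑ i : Fin m, ((P i : ℂ) / (starRingEnd ℂ) (z₀ - a i)) * (z - a i)⁻¹ with hg
    have hdiff : DiffContOnCl ℂ g U := by
      apply DifferentiableOn.diffContOnCl
      apply DifferentiableOn.mono ?_ hclU
      apply DifferentiableOn.fun_sum
      intro i _
      refine (differentiableOn_const _).mul ?_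
      refine DifferentiableOn.inv ?_ ?_
      · exact (differentiable_id.sub_const _).differentiableOn
      · intro z hz
        exact sub_ne_zero.mpr (hne_a z hz i)
    obtain ⟨w, hwF, hmaxg⟩ :=
      Complex.exists_mem_frontier_isMaxOn_norm hbdd ⟨z₀, hz₀U⟩ hdiff
    -- `e w` lies on the frontier of `D`
    have hwfD : e w ∈ frontier D := by
      have h1 : frontier U = ⇑e ⁻¹' frontier (interior D) :=
        (e.toHomeomorph.preimage_frontier (interior D)).symm
      rw [h1] at hwF
      exact frontier_interior_subset hwF
    have hwD : e w ∈ D := hDclosed.frontier_subset hwfD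
    have hwDpre : w ∈ ⇑e ⁻¹' D := hwD
    have hz₀Dpre : z₀ ∈ ⇑e ⁻¹' D := hsubD hz₀U
    -- `‖g z₀‖ = M`
    have hgz₀ : g z₀ = (M : ℂ) := by
      rw [hg, hMJ, hJ]
      push_cast
      apply Finset.sum_congr rfl
      intro i _
      have hc : z₀ - a i ≠ 0 := sub_ne_zero.mpr (hne_a z₀ hz₀Dpre i)
      have h1 : ((‖z₀ - a i‖ : ℝ) : ℂ) ^ 2
          = (starRingEnd ℂ) (z₀ - a i) * (z₀ - a i) := by
        rw [← Complex.ofReal_pow, Complex.sq_norm, mul_comm, Complex.mul_conj]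
      rw [Complex.dist_eq, h1, ← div_div, div_eq_mul_inv]
      ring
    have hnormgz₀ : ‖g z₀‖ = M := by
      rw [hgz₀, Complex.norm_real, Real.norm_eq_abs, abs_of_nonneg hMnonneg]
    -- bound `‖g w‖` by Cauchy–Schwarz
    have hgw_le : ‖g w‖ ≤ ∑ i : Fin m, P i / (dist w (a i) * dist z₀ (a i)) := by
      refine le_trans (norm_sum_le _ _) (le_of_eq ?_)
      apply Finset.sum_congr rfl
      intro i _
      have hc : z₀ - a i ≠ 0 := sub_ne_zero.mpr (hne_a z₀ hz₀Dpre i)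
      have hd : w - a i ≠ 0 := sub_ne_zero.mpr (hne_a w hwDpre i)
      have hc' : ‖z₀ - a i‖ ≠ 0 := by simpa [sub_eq_zero] using hc
      have hd' : ‖w - a i‖ ≠ 0 := by simpa [sub_eq_zero] using hd
      rw [norm_mul, norm_div, norm_inv,
        Complex.norm_conj, Complex.norm_real, Real.norm_eq_abs,
        abs_of_nonneg (hP i).le, Complex.dist_eq, Complex.dist_eq]
      rw [mul_comm (‖w - a i‖), ← div_div, div_eq_mul_inv]
      ring
    have hCS : (∑ i : Fin m, P i / (dist w (a i) * dist z₀ (a i))) ^ 2 ≤ J w * M := by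
      rw [hMJ, hJ]
      have := Finset.sum_mul_sq_le_sq_mul_sq Finset.univ
        (fun i => Real.sqrt (P i) / dist w (a i))
        (fun i => Real.sqrt (P i) / dist z₀ (a i))
      refine le_trans (le_of_eq ?_) (le_trans this (le_of_eq ?_))
      · congr 1
        apply Finset.sum_congr rfl
        intro i _
        rw [div_mul_div_comm, Real.mul_self_sqrt (hP i).le]
      · congr 1
        · apply Finset.sum_congr rfl
          intro i _
          rw [div_pow, Real.sq_sqrt (hP i).le]
        · apply Finset.sum_congr rfl
          intro i _
          rw [div_pow, Real.sq_sqrt (hP i).le]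
    -- conclude `M ≤ J (e w)` hence `e w` achieves the max on the frontier
    have hM_le : M ≤ J w := by
      have h1 : M ≤ ∑ i : Fin m, P i / (dist w (a i) * dist z₀ (a i)) := by
        calc M = ‖g z₀‖ := hnormgz₀.symm
        _ ≤ ‖g w‖ := hmaxg (subset_closure hz₀U)
        _ ≤ _ := hgw_le
      have hJw : 0 ≤ J w := Finset.sum_nonneg fun i _ =>
        div_nonneg (hP i).le (sq_nonneg _)
      nlinarith [sq_nonneg M]
    refine ⟨e w, hwfD, fun p hp => ?_⟩
    have : interference s P (e w) = J w := by
      rw [hJI, LinearIsometryEquiv.symm_apply_apply]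
    rw [this]
    exact le_trans (hmax hp) hM_le
  · refine ⟨p₀, ?_, fun p hp => hmax hp⟩
    rw [hDclosed.frontier_eq]
    exact ⟨hp₀D, hint⟩
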